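/- Let ζ : ℝ → ℝ be 2π-periodic and integrable on [−π, π], and set ζ̄ := (1/2π)·∫_{−π}^{π} ζ(y) dy. Then (1/π)·∫_{−π}^{π} ( −(1/4)·(π − |x|)·sign(x) )·ζ(x) dx = −(1/4π)·∫_{−π}^{π} ( ∫₀^{x} (ζ(y) − ζ̄) dy ) dx. Equivalently, (1/π)·∮ η_*' ζ dx = (1/2)·(Π₀∂ₓ⁻¹Π₀ ζ)(0), where η_* is the peaked profile with peak at x = 0. -/

import Mathlib

/-!
On `(-π, π)` one has `η_*'(x) = (x - π sign x) / 4`. Integrating the primitive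
`G x = ∫₀ˣ ζ` by parts against `x` gives `∫ G = π (G π + G (-π)) - ∫ x ζ`, and the boundary
terms are exactly `π ∫ sign · ζ`; so `∫ (x - π sign x) ζ = -∫ G`. The mean `ζ̄` contributes
`ζ̄ ∫ x dx = 0` on the symmetric interval. Since `ζ` is only integrable, the integration by parts
is the one for absolutely continuous functions.
-/

open Real MeasureTheory Set

theorem Real.abs_mul_sign (x : ℝ) : |x| * Real.sign x = x := by
  rcases lt_trichotomy x 0 with hx | rfl | hx
  · rw [abs_of_neg hx, Real.sign_of_neg hx]; ring
  · simp
  · rw [abs_of_pos hx, Real.sign_of_pos hx, mul_one]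

namespace intervalIntegral

variable {g : ℝ → ℝ}

theorem integral_primitive_eq_sub_integral_mul {a b c : ℝ} (hg : IntervalIntegrable g volume a b)
    (hc : c ∈ uIcc a b) :
    ∫ x in a..b, (∫ y in c..x, g y) =
      b * (∫ y in c..b, g y) - a * (∫ y in c..a, g y) - ∫ x in a..b, x * g x := by
  have hid : AbsolutelyContinuousOnInterval id a b :=
    LipschitzWith.id.lipschitzOnWith.absolutelyContinuousOnInterval
  have hderiv : ∫ x in a..b, x * deriv (fun x => ∫ y in c..x, g y) x = ∫ x in a..b, x * g x := by
    refine integral_congr_ae ?_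
    filter_upwards [hg.ae_hasDerivAt_integral] with x hx hxab
    rw [(hx (uIoc_subset_uIcc hxab) c hc).deriv]
  have hparts := hid.integral_mul_deriv_eq_deriv_mul
    (hg.absolutelyContinuousOnInterval_intervalIntegral hc)
  simp only [id_eq, deriv_id, one_mul, hderiv] at hparts
  linarith

section Symmetric

variable {a : ℝ}

theorem zero_mem_uIcc_neg_self (a : ℝ) : (0 : ℝ) ∈ uIcc (-a) a := by
  rcases le_total 0 a with ha | ha <;> simp [ha]

theorem integral_integral_sub_const (hg : IntervalIntegrable g volume (-a) a) (c : ℝ) :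
    ∫ x in -a..a, (∫ y in 0..x, (g y - c)) = ∫ x in -a..a, (∫ y in 0..x, g y) := by
  have h0 := zero_mem_uIcc_neg_self a
  have hinner : EqOn (fun x => ∫ y in 0..x, (g y - c)) (fun x => (∫ y in 0..x, g y) - x * c)
      (uIcc (-a) a) := fun x hx => by
    simp [integral_sub (hg.mono_set (uIcc_subset_uIcc h0 hx)) intervalIntegrable_const]
  rw [integral_congr hinner, integral_sub
    (continuousOn_primitive_interval' hg h0).intervalIntegrable 
      ((continuous_mul_const c).intervalIntegrable _ _),
    integral_mul_const, integral_id]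
  ring

theorem sign_mul_eqOn_uIoo_neg_zero (ha : 0 ≤ a) :
    EqOn (fun x => Real.sign x * g x) (fun x => -g x) (uIoo (-a) 0) := fun x hx => by
  rw [uIoo_of_le (by linarith)] at hx
  simp [Real.sign_of_neg hx.2]

theorem sign_mul_eqOn_uIoo_zero (ha : 0 ≤ a) :
    EqOn (fun x => Real.sign x * g x) g (uIoo 0 a) := fun x hx => by
  rw [uIoo_of_le ha] at hx
  simp [Real.sign_of_pos hx.1]

theorem intervalIntegrable_sign_mul (ha : 0 ≤ a) (hg : IntervalIntegrable g volume (-a) a) :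
    IntervalIntegrable (fun x => Real.sign x * g x) volume (-a) a := by
  have h0 := zero_mem_uIcc_neg_self a
  exact ((hg.mono_set (uIcc_subset_uIcc_left h0)).neg.congr_uIoo
    (sign_mul_eqOn_uIoo_neg_zero ha).symm).trans
    ((hg.mono_set (uIcc_subset_uIcc_right h0)).congr_uIoo (sign_mul_eqOn_uIoo_zero ha).symm)

theorem integral_sign_mul (ha : 0 ≤ a) (hg : IntervalIntegrable g volume (-a) a) :
    ∫ x in -a..a, Real.sign x * g x = (∫ x in 0..a, g x) - ∫ x in -a..0, g x := by
  have h0 := zero_mem_uIcc_neg_self a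
  rw [← integral_add_adjacent_intervals
      ((intervalIntegrable_sign_mul ha hg).mono_set (uIcc_subset_uIcc_left h0))
      ((intervalIntegrable_sign_mul ha hg).mono_set (uIcc_subset_uIcc_right h0)),
    integral_congr_uIoo (sign_mul_eqOn_uIoo_neg_zero ha),
    integral_congr_uIoo (sign_mul_eqOn_uIoo_zero ha), integral_neg]
  ring

theorem integral_sub_mul_sign_mul (ha : 0 ≤ a) (hg : IntervalIntegrable g volume (-a) a) :
    ∫ x in -a..a, (x - a * Real.sign x) * g x = -∫ x in -a..a, (∫ y in 0..x, g y) := by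
  have hsplit : ∀ x, (x - a * Real.sign x) * g x = x * g x - a * (Real.sign x * g x) :=
    fun x => by ring
  simp_rw [hsplit]
  rw [integral_sub (hg.continuousOn_mul (continuousOn_id' _))
      ((intervalIntegrable_sign_mul ha hg).const_mul a), integral_const_mul,
    integral_sign_mul ha hg, integral_primitive_eq_sub_integral_mul hg (zero_mem_uIcc_neg_self a),
    integral_symm (-a) 0]
  ring

end Symmetric

end intervalIntegral

theorem key_cancellation (ζ : ℝ → ℝ)
    (hint : IntervalIntegrable ζ volume (-π) π) :
    (1/π) * (∫ x in (-π)..π, (-(1/4) * (π - |x|) * Real.sign x) * ζ x)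
      = -(1/(4*π)) * ∫ x in (-π)..π,
          (∫ y in (0:ℝ)..x, (ζ y - (1/(2*π)) * ∫ s in (-π)..π, ζ s)) := by
  have hφ : ∀ x, (-(1/4) * (π - |x|) * Real.sign x) * ζ x
      = 1/4 * ((x - π * Real.sign x) * ζ x) := fun x => by
    linear_combination (1/4 * ζ x) * Real.abs_mul_sign x
  simp_rw [hφ]
  rw [intervalIntegral.integral_const_mul, intervalIntegral.integral_integral_sub_const hint,
    intervalIntegral.integral_sub_mul_sign_mul pi_pos.le hint]
  ring
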